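/- Let $l\ge 1$ be an integer, let $0\le\alpha<l$, let $r>0$, and let $s$ be a real number with $s>-\min(1,\,l-\alpha)$. Then $\int_{(0,r)^l} t_1^{\,s}\,|\mathbf{t}|^{-\alpha}\,d\mathbf{t} < \infty$, where $\mathbf{t}=(t_1,\dots,t_l)$ and $|\mathbf{t}|$ denotes the Euclidean norm. -/

import Mathlib

open MeasureTheory Real Filter Topology Set
open scoped ENNReal

noncomputable section

/-!
Every coordinate of a point of the positive orthant is at most its Euclidean norm `q`, so for
weights `bᵢ ≥ 0` and `θ ≥ 0` one may spend the decay `q ^ (-θ ∑ bᵢ)` coordinatewise: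
`q ^ (-θ ∑ bᵢ) ≤ ∏ tᵢ ^ (-θ bᵢ)`. With `b = (s + 1, 1, …, 1)` and `θ = α / (l + s)` this gives
`t₁ ^ s |t| ^ (-α) ≤ ∏ tᵢ ^ ((1 - θ) bᵢ - 1)`, a product of one-variable powers with exponents
`> -1`, which is integrable on the box. The two halves of the condition on `s` are `s + 1 > 0`
and `θ < 1`.
-/

theorem le_sqrt_sum_sq {ι : Type*} [Fintype ι] (x : ι → ℝ) (i : ι) :
    x i ≤ √(∑ j, x j ^ 2) :=
  (le_abs_self _).trans
    (Real.abs_le_sqrt (Finset.single_le_sum (fun j _ => sq_nonneg (x j)) (Finset.mem_univ i)))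

theorem rpow_neg_sum_le_prod_rpow_neg {ι : Type*} [Fintype ι] {x e : ι → ℝ} {q : ℝ}
    (hq : 0 < q) (hx : ∀ i, 0 < x i) (hxq : ∀ i, x i ≤ q) (he : ∀ i, 0 ≤ e i) :
    q ^ (-∑ i, e i) ≤ ∏ i, x i ^ (-e i) := by
  rw [← Finset.sum_neg_distrib, Real.rpow_sum_of_pos hq]
  exact Finset.prod_le_prod (fun i _ => rpow_nonneg hq.le _)
    fun i _ => rpow_le_rpow_of_nonpos (hx i) (hxq i) (neg_nonpos.2 (he i))

theorem prod_rpow_mul_rpow_neg_le_prod_rpow {ι : Type*} [Fintype ι] {x b : ι → ℝ} {q θ : ℝ}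
    (hq : 0 < q) (hx : ∀ i, 0 < x i) (hxq : ∀ i, x i ≤ q) (hb : ∀ i, 0 ≤ b i) (hθ : 0 ≤ θ) :
    (∏ i, x i ^ (b i - 1)) * q ^ (-(θ * ∑ i, b i)) ≤ ∏ i, x i ^ ((1 - θ) * b i - 1) :=
  calc (∏ i, x i ^ (b i - 1)) * q ^ (-(θ * ∑ i, b i))
      = (∏ i, x i ^ (b i - 1)) * q ^ (-∑ i, θ * b i) := by rw [Finset.mul_sum]
    _ ≤ (∏ i, x i ^ (b i - 1)) * ∏ i, x i ^ (-(θ * b i)) := by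
        gcongr
        · exact Finset.prod_nonneg fun i _ => rpow_nonneg (hx i).le _
        · exact rpow_neg_sum_le_prod_rpow_neg hq hx hxq fun i => mul_nonneg hθ (hb i)
    _ = ∏ i, x i ^ ((1 - θ) * b i - 1) := by
        rw [← Finset.prod_mul_distrib]
        refine Finset.prod_congr rfl fun i _ => ?_
        rw [← rpow_add (hx i)]
        ring_nf

theorem sum_one_add_single {ι : Type*} [Fintype ι] [DecidableEq ι] (i₀ : ι) (s : ℝ) :
    ∑ i, (1 + Pi.single i₀ s : ι → ℝ) i = Fintype.card ι + s := by
  simp [Finset.sum_add_distrib]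

theorem prod_rpow_one_add_single_sub_one {ι : Type*} [Fintype ι] [DecidableEq ι] (x : ι → ℝ)
    (i₀ : ι) (s : ℝ) : ∏ i, x i ^ ((1 + Pi.single i₀ s : ι → ℝ) i - 1) = x i₀ ^ s := by
  rw [Finset.prod_eq_single i₀ (fun i _ hi => by simp [hi]) (by simp)]
  simp

theorem lintegral_pi_Ioo_prod_rpow_lt_top {ι : Type*} [Fintype ι] (r : ℝ) {p : ι → ℝ}
    (hp : ∀ i, -1 < p i) :
    ∫⁻ t in univ.pi (fun _ : ι => Ioo 0 r), ENNReal.ofReal (∏ i, t i ^ p i) < ⊤ := by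
  have hint : Integrable (fun t : ι → ℝ => ∏ i, t i ^ p i)
      (Measure.pi fun _ => volume.restrict (Ioo 0 r)) :=
    Integrable.fintype_prod fun i =>
      (intervalIntegral.intervalIntegrable_rpow' (hp i) (a := 0) (b := r)).1.mono_set
        Ioo_subset_Ioc_self
  rw [volume_pi, Measure.restrict_pi_pi]
  exact (lintegral_mono fun t => ofReal_le_enorm _).trans_lt hint.2

theorem integral_t1_pow_weight_finite_general
    (l : ℕ) (hl : 1 ≤ l) (α : ℝ) (hα0 : 0 ≤ α)
    (r : ℝ) (s : ℝ) (hs : -min 1 ((l : ℝ) - α) < s) :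
    ∫⁻ t in Set.univ.pi (fun _ : Fin l => Set.Ioo (0 : ℝ) r),
      ENNReal.ofReal (t ⟨0, hl⟩ ^ s * Real.sqrt (∑ i, t i ^ 2) ^ (-α)) < ⊤ := by
  obtain ⟨hs1, hsl⟩ := lt_min_iff.1 (neg_lt.1 hs)
  have hls : 0 < (l : ℝ) + s := by
    have : (1 : ℝ) ≤ l := by exact_mod_cast hl
    linarith
  set θ := α / (l + s)
  have hθ1 : θ < 1 := (div_lt_one hls).2 (by linarith)
  set b : Fin l → ℝ := 1 + Pi.single ⟨0, hl⟩ s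
  have hb (i : Fin l) : 0 < b i := by
    rcases eq_or_ne i ⟨0, hl⟩ with rfl | hi
    · simp only [b, Pi.add_apply, Pi.one_apply, Pi.single_eq_same]; linarith
    · simp [b, hi]
  have hα : α = θ * ∑ i, b i := by
    rw [sum_one_add_single, Fintype.card_fin, div_mul_cancel₀ _ hls.ne']
  have hp (i : Fin l) : -1 < (1 - θ) * b i - 1 := by nlinarith [hb i]
  refine (setLIntegral_mono' (MeasurableSet.univ_pi fun _ => measurableSet_Ioo)
    fun t ht => ENNReal.ofReal_le_ofReal ?_).trans_lt (lintegral_pi_Ioo_prod_rpow_lt_top r hp)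
  have ht₀ (i : Fin l) : 0 < t i := (ht i (mem_univ i)).1
  rw [hα, ← prod_rpow_one_add_single_sub_one t ⟨0, hl⟩ s]
  exact prod_rpow_mul_rpow_neg_le_prod_rpow ((ht₀ _).trans_le (le_sqrt_sum_sq t ⟨0, hl⟩)) ht₀
    (le_sqrt_sum_sq t) (fun i => (hb i).le) (by positivity)

/-- The computation (3.6)-(3.7): for an integer `l ≥ 1`, `0 ≤ α < l`, `r > 0` and
`s > -min(1, l - α)`, the integral `∫_{(0,r)^l} t₁^s |t|^{-α} dt` is finite. -/
theorem integral_t1_pow_weight_finite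
    (l : ℕ) (hl : 1 ≤ l) (α : ℝ) (hα0 : 0 ≤ α) (hαl : α < l)
    (r : ℝ) (hr : 0 < r) (s : ℝ) (hs : -min 1 ((l : ℝ) - α) < s) :
    ∫⁻ t in Set.univ.pi (fun _ : Fin l => Set.Ioo (0 : ℝ) r),
      ENNReal.ofReal (t ⟨0, hl⟩ ^ s * Real.sqrt (∑ i, t i ^ 2) ^ (-α)) < ⊤ :=
  integral_t1_pow_weight_finite_general l hl α hα0 r s hs
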